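/- (Unary state preparation via a ladder of controlled rotations.) Given real angles θ_0, …, θ_{d−1}, consider the d-qubit circuit that applies R_y(θ_0) to qubit 1, then for k = 1,…,d−1 applies R_y(θ_k) to qubit k+1 controlled on qubit k. Applied to |0⟩^{⊗d}, this circuit produces Σ_{k=0}^{d} w_k |k_u⟩, where |k_u⟩ = |1⟩^{⊗k}|0⟩^{⊗(d−k)} is the unary encoding, w_k = (∏_{m=0}^{k−1} sin(θ_m/2)) · cos(θ_k/2) for 0 ≤ k ≤ d−1, and w_d = ∏_{m=0}^{d−1} sin(θ_m/2). -/
import Mathlib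


open Matrix

noncomputable section

/-- The rotation gate `R_y(θ)`. -/
def Ry (θ : ℝ) : Matrix (Fin 2) (Fin 2) ℂ :=
  !![(Real.cos (θ / 2) : ℂ), -(Real.sin (θ / 2) : ℂ);
     (Real.sin (θ / 2) : ℂ), (Real.cos (θ / 2) : ℂ)]

/-- The single-qubit gate `g` applied to qubit `q` of `d` qubits. -/
def onQubit (d : ℕ) (q : Fin d) (g : Matrix (Fin 2) (Fin 2) ℂ) :
    Matrix (Fin d → Fin 2) (Fin d → Fin 2) ℂ :=
  fun x y => (if ∀ ℓ, ℓ ≠ q → x ℓ = y ℓ then 1 else 0) * g (x q) (y q)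

/-- The gate `g` on target qubit `tq` controlled on qubit `cq`. -/
def ctrlOnQubit (d : ℕ) (cq tq : Fin d) (g : Matrix (Fin 2) (Fin 2) ℂ) :
    Matrix (Fin d → Fin 2) (Fin d → Fin 2) ℂ :=
  fun x y => (if ∀ ℓ, ℓ ≠ tq → x ℓ = y ℓ then 1 else 0) *
    (if y cq = 1 then g (x tq) (y tq) else if x tq = y tq then 1 else 0)

/-- The `k`-th gate of the ladder: `R_y(θ_0)` on qubit `0` for `k = 0`, and for
`k ≥ 1` the rotation `R_y(θ_k)` on qubit `k` controlled on qubit `k-1`. -/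
def ladderGate (d : ℕ) (θ : Fin d → ℝ) (k : Fin d) :
    Matrix (Fin d → Fin 2) (Fin d → Fin 2) ℂ :=
  if (k : ℕ) = 0 then onQubit d k (Ry (θ k))
  else ctrlOnQubit d ⟨(k : ℕ) - 1, by omega⟩ k (Ry (θ k))

/-- The unary encoding `|k_u⟩ = |1⟩^{⊗k}|0⟩^{⊗(d−k)}` as a bit string. -/
def unary (d : ℕ) (k : ℕ) : Fin d → Fin 2 :=
  fun ℓ => if (ℓ : ℕ) < k then 1 else 0

/-- The amplitude `w_k = (∏_{m<k} sin(θ_m/2)) cos(θ_k/2)` for `k ≤ d-1`, and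
`w_d = ∏_{m<d} sin(θ_m/2)`. -/
def wAmp (d : ℕ) (θ : Fin d → ℝ) (k : Fin (d + 1)) : ℝ :=
  (∏ m : Fin d, if (m : ℕ) < (k : ℕ) then Real.sin (θ m / 2) else 1) *
    (if h : (k : ℕ) < d then Real.cos (θ ⟨(k : ℕ), h⟩ / 2) else 1)

/-! ### Auxiliary definitions and lemmas -/

def sAng (d : ℕ) (θ : Fin d → ℝ) (k : ℕ) : ℂ :=
  if h : k < d then (Real.sin (θ ⟨k, h⟩ / 2) : ℂ) else 1

def cAng (d : ℕ) (θ : Fin d → ℝ) (k : ℕ) : ℂ :=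
  if h : k < d then (Real.cos (θ ⟨k, h⟩ / 2) : ℂ) else 1

/-- The state after the first `j` gates of the ladder. -/
def psi (d : ℕ) (θ : Fin d → ℝ) (j : ℕ) : (Fin d → Fin 2) → ℂ :=
  fun x => ∑ k ∈ Finset.range (j+1),
    ((∏ m ∈ Finset.range k, sAng d θ m) * (if k < j then cAng d θ k else 1)) *
      (if x = unary d k then 1 else 0)

lemma mulVec_sum {n : ℕ} (M : Matrix (Fin n → Fin 2) (Fin n → Fin 2) ℂ) (s : Finset ℕ)
    (f : ℕ → ℂ) (u : ℕ → (Fin n → Fin 2)) :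
    M.mulVec (fun y => ∑ k ∈ s, f k * (if y = u k then 1 else 0))
      = fun x => ∑ k ∈ s, f k * M x (u k) := by
  funext x
  simp only [Matrix.mulVec, dotProduct, Finset.mul_sum]
  rw [Finset.sum_comm]
  refine Finset.sum_congr rfl fun k _ => ?_
  simp [mul_ite, mul_comm]

lemma take_rev_prod {M : Type*} [Monoid M] (L : List M) (j : ℕ) (h : j < L.length) :
    (L.take (j+1)).reverse.prod = L[j] * (L.take j).reverse.prod := by
  rw [List.take_succ, List.getElem?_eq_getElem h, List.reverse_append]; simp

lemma prod_ite_range {M : Type*} [CommMonoid M] (g : ℕ → M) :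
    ∀ n k, k ≤ n → ∏ i ∈ Finset.range n, (if i < k then g i else 1)
      = ∏ i ∈ Finset.range k, g i := by
  intro n
  induction n with
  | zero => intro k hk; simp [Nat.le_zero.mp hk]
  | succ n ih =>
    intro k hk
    rcases eq_or_lt_of_le hk with h | h
    · subst h
      rw [Finset.prod_range_succ, if_pos (Nat.lt_succ_self n), Finset.prod_range_succ]
      congr 1
      refine Finset.prod_congr rfl fun i hi => if_pos ?_
      exact lt_trans (Finset.mem_range.mp hi) (Nat.lt_succ_self n)
    · rw [Finset.prod_range_succ, if_neg (by omega), mul_one, ih k (by omega)]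

lemma Ry00 (θ : ℝ) : Ry θ 0 0 = (Real.cos (θ/2) : ℂ) := by simp [Ry]
lemma Ry10 (θ : ℝ) : Ry θ 1 0 = (Real.sin (θ/2) : ℂ) := by simp [Ry]

lemma gateA {d : ℕ} (h0 : 0 < d) (θ0 : ℝ) (x : Fin d → Fin 2) :
    onQubit d ⟨0, h0⟩ (Ry θ0) x (unary d 0)
      = (Real.cos (θ0/2) : ℂ) * (if x = unary d 0 then 1 else 0)
        + (Real.sin (θ0/2) : ℂ) * (if x = unary d 1 then 1 else 0) := by
  have hu0 : ∀ ℓ : Fin d, unary d 0 ℓ = 0 := fun ℓ => by simp [unary]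
  have hu1q : unary d 1 ⟨0, h0⟩ = 1 := by simp [unary]
  have hu1 : ∀ ℓ : Fin d, ℓ ≠ ⟨0, h0⟩ → unary d 1 ℓ = 0 := by
    intro ℓ hℓ
    have : (ℓ : ℕ) ≠ 0 := by simpa [Fin.ext_iff] using hℓ
    simp [unary]; omega
  unfold onQubit
  by_cases hc : ∀ ℓ, ℓ ≠ (⟨0, h0⟩ : Fin d) → x ℓ = unary d 0 ℓ
  · rw [if_pos hc, one_mul, hu0 ⟨0, h0⟩]
    rcases (show x ⟨0, h0⟩ = 0 ∨ x ⟨0, h0⟩ = 1 by omega) with h | h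
    · have hx : x = unary d 0 := funext fun ℓ => by
        by_cases hℓ : ℓ = ⟨0, h0⟩
        · rw [hℓ, h, hu0]
        · exact hc ℓ hℓ
      have hx1 : x ≠ unary d 1 := by
        intro he; rw [he, hu1q] at h; exact absurd h (by decide)
      rw [h, if_pos hx, if_neg hx1, Ry00]; ring
    · have hx : x = unary d 1 := funext fun ℓ => by
        by_cases hℓ : ℓ = ⟨0, h0⟩
        · rw [hℓ, h, hu1q]
        · rw [hc ℓ hℓ, hu0, hu1 ℓ hℓ]
      have hx0 : x ≠ unary d 0 := by
        intro he; rw [he, hu0] at h; exact absurd h (by decide)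
      rw [h, if_pos hx, if_neg hx0, Ry10]; ring
  · have hx0 : x ≠ unary d 0 := fun he => hc fun ℓ _ => by rw [he]
    have hx1 : x ≠ unary d 1 := by
      intro he; exact hc fun ℓ hℓ => by rw [he, hu1 ℓ hℓ, hu0]
    rw [if_neg hc, zero_mul, if_neg hx0, if_neg hx1]; ring

lemma gateB1 {d j k : ℕ} (hj : j < d) (hj' : j - 1 < d) (hj1 : 1 ≤ j) (hk : k < j)
    (θj : ℝ) (x : Fin d → Fin 2) :
    ctrlOnQubit d ⟨j-1, hj'⟩ ⟨j, hj⟩ (Ry θj) x (unary d k)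
      = if x = unary d k then 1 else 0 := by
  have hcq : unary d k ⟨j-1, hj'⟩ = 0 := by simp [unary]; omega
  unfold ctrlOnQubit
  rw [hcq, if_neg (by decide : ¬((0 : Fin 2) = 1))]
  by_cases hc : ∀ ℓ, ℓ ≠ (⟨j, hj⟩ : Fin d) → x ℓ = unary d k ℓ
  · rw [if_pos hc, one_mul]
    by_cases ht : x ⟨j, hj⟩ = unary d k ⟨j, hj⟩
    · have hx : x = unary d k := funext fun ℓ => by
        by_cases hℓ : ℓ = ⟨j, hj⟩
        · rw [hℓ]; exact ht
        · exact hc ℓ hℓ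
      rw [if_pos ht, if_pos hx]
    · have hx : x ≠ unary d k := fun he => ht (by rw [he])
      rw [if_neg ht, if_neg hx]
  · have hx : x ≠ unary d k := fun he => hc fun ℓ _ => by rw [he]
    rw [if_neg hc, zero_mul, if_neg hx]

lemma gateB2 {d j : ℕ} (hj : j < d) (hj' : j - 1 < d) (hj1 : 1 ≤ j) (θj : ℝ)
    (x : Fin d → Fin 2) :
    ctrlOnQubit d ⟨j-1, hj'⟩ ⟨j, hj⟩ (Ry θj) x (unary d j)
      = (Real.cos (θj/2) : ℂ) * (if x = unary d j then 1 else 0)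
        + (Real.sin (θj/2) : ℂ) * (if x = unary d (j+1) then 1 else 0) := by
  have hcq : unary d j ⟨j-1, hj'⟩ = 1 := by simp [unary]; omega
  have htq : unary d j ⟨j, hj⟩ = 0 := by simp [unary]
  have htq1 : unary d (j+1) ⟨j, hj⟩ = 1 := by simp [unary]
  have hoff : ∀ ℓ : Fin d, ℓ ≠ ⟨j, hj⟩ → unary d (j+1) ℓ = unary d j ℓ := by
    intro ℓ hℓ
    have h' : (ℓ : ℕ) ≠ j := by simpa [Fin.ext_iff] using hℓ
    have : ((ℓ : ℕ) < j+1) ↔ ((ℓ : ℕ) < j) := by omega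
    simp [unary, this]
  unfold ctrlOnQubit
  rw [hcq, if_pos rfl, htq]
  by_cases hc : ∀ ℓ, ℓ ≠ (⟨j, hj⟩ : Fin d) → x ℓ = unary d j ℓ
  · rw [if_pos hc, one_mul]
    rcases (show x ⟨j, hj⟩ = 0 ∨ x ⟨j, hj⟩ = 1 by omega) with h | h
    · have hx : x = unary d j := funext fun ℓ => by
        by_cases hℓ : ℓ = ⟨j, hj⟩
        · rw [hℓ, h, htq]
        · exact hc ℓ hℓ
      have hx1 : x ≠ unary d (j+1) := by
        intro he; rw [he, htq1] at h; exact absurd h (by decide)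
      rw [h, if_pos hx, if_neg hx1, Ry00]; ring
    · have hx : x = unary d (j+1) := funext fun ℓ => by
        by_cases hℓ : ℓ = ⟨j, hj⟩
        · rw [hℓ, h, htq1]
        · rw [hc ℓ hℓ, ← hoff ℓ hℓ]
      have hx0 : x ≠ unary d j := by
        intro he; rw [he, htq] at h; exact absurd h (by decide)
      rw [h, if_pos hx, if_neg hx0, Ry10]; ring
  · have hx0 : x ≠ unary d j := fun he => hc fun ℓ _ => by rw [he]
    have hx1 : x ≠ unary d (j+1) := by
      intro he; exact hc fun ℓ hℓ => by rw [he, hoff ℓ hℓ]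
    rw [if_neg hc, zero_mul, if_neg hx0, if_neg hx1]; ring

lemma gate_lower (d : ℕ) (θ : Fin d → ℝ) (j k : ℕ) (hj : j < d) (hk : k < j)
    (x : Fin d → Fin 2) :
    ladderGate d θ ⟨j, hj⟩ x (unary d k) = if x = unary d k then 1 else 0 := by
  have h1 : 1 ≤ j := by omega
  unfold ladderGate
  rw [if_neg (show ¬((⟨j, hj⟩ : Fin d) : ℕ) = 0 from by simp; omega)]
  exact gateB1 hj (by omega) h1 hk _ x

lemma gate_top (d : ℕ) (θ : Fin d → ℝ) (j : ℕ) (hj : j < d) (x : Fin d → Fin 2) :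
    ladderGate d θ ⟨j, hj⟩ x (unary d j)
      = cAng d θ j * (if x = unary d j then 1 else 0)
        + sAng d θ j * (if x = unary d (j+1) then 1 else 0) := by
  have hcA : cAng d θ j = (Real.cos (θ ⟨j, hj⟩ / 2) : ℂ) := by
    unfold cAng; rw [dif_pos hj]
  have hsA : sAng d θ j = (Real.sin (θ ⟨j, hj⟩ / 2) : ℂ) := by
    unfold sAng; rw [dif_pos hj]
  rw [hcA, hsA]
  rcases Nat.eq_zero_or_pos j with rfl | h1
  · unfold ladderGate
    rw [if_pos (show ((⟨0, hj⟩ : Fin d) : ℕ) = 0 from rfl)]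
    exact gateA hj _ x
  · unfold ladderGate
    rw [if_neg (show ¬((⟨j, hj⟩ : Fin d) : ℕ) = 0 from by simp; omega)]
    exact gateB2 hj (by omega) h1 _ x

lemma step (d : ℕ) (θ : Fin d → ℝ) (j : ℕ) (hj : j < d) :
    (ladderGate d θ ⟨j, hj⟩).mulVec (psi d θ j) = psi d θ (j+1) := by
  unfold psi
  rw [mulVec_sum]
  funext x
  rw [Finset.sum_range_succ]
  have hsum1 : (∑ k ∈ Finset.range j,
      ((∏ m ∈ Finset.range k, sAng d θ m) * (if k < j then cAng d θ k else 1)) *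
        ladderGate d θ ⟨j, hj⟩ x (unary d k))
      = ∑ k ∈ Finset.range j,
        ((∏ m ∈ Finset.range k, sAng d θ m) * (if k < j + 1 then cAng d θ k else 1)) *
          (if x = unary d k then 1 else 0) := by
    refine Finset.sum_congr rfl fun k hk => ?_
    have hk' := Finset.mem_range.mp hk
    rw [gate_lower d θ j k hj hk' x, if_pos hk', if_pos (by omega : k < j + 1)]
  rw [hsum1, gate_top d θ j hj x]
  rw [Finset.sum_range_succ, Finset.sum_range_succ]
  rw [if_neg (lt_irrefl j), if_pos (Nat.lt_succ_self j), if_neg (lt_irrefl (j+1)),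
    Finset.prod_range_succ]
  ring

lemma ladder_take (d : ℕ) (θ : Fin d → ℝ) :
    ∀ j, j ≤ d →
      ((List.ofFn fun k : Fin d => ladderGate d θ k).take j).reverse.prod.mulVec
        (fun x : Fin d → Fin 2 => if x = unary d 0 then 1 else 0) = psi d θ j := by
  intro j
  induction j with
  | zero =>
    intro _
    funext x
    simp [psi, Matrix.one_mulVec]
  | succ j ih =>
    intro hj
    have hjd : j < d := hj
    have hlen : (List.ofFn fun k : Fin d => ladderGate d θ k).length = d := by simp
    rw [take_rev_prod _ j (by rw [hlen]; exact hjd)]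
    rw [← Matrix.mulVec_mulVec, ih (le_of_lt hjd)]
    have hLj : (List.ofFn fun k : Fin d => ladderGate d θ k)[j]'(by rw [hlen]; exact hjd)
        = ladderGate d θ ⟨j, hjd⟩ := by
      simp
    rw [hLj]
    exact step d θ j hjd

theorem stmt12 (d : ℕ) (θ : Fin d → ℝ) :
    ((List.ofFn fun k : Fin d => ladderGate d θ k).reverse.prod).mulVec
      (fun x : Fin d → Fin 2 => if x = unary d 0 then 1 else 0)
    = fun x : Fin d → Fin 2 =>
        ∑ k : Fin (d + 1), (wAmp d θ k : ℂ) * (if x = unary d (k : ℕ) then 1 else 0) := by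
  have hT : (List.ofFn fun k : Fin d => ladderGate d θ k).take d
      = List.ofFn fun k : Fin d => ladderGate d θ k := by
    apply List.take_of_length_le
    simp
  have h := ladder_take d θ d le_rfl
  rw [hT] at h
  rw [h]
  funext x
  unfold psi
  have hW : ∀ k : Fin (d+1), (wAmp d θ k : ℂ)
      = (∏ m ∈ Finset.range (k : ℕ), sAng d θ m) *
          (if (k : ℕ) < d then cAng d θ (k : ℕ) else 1) := by
    intro k
    unfold wAmp
    push_cast
    congr 1
    · rw [show (∏ m : Fin d, ((if (m : ℕ) < (k : ℕ) then Real.sin (θ m / 2) else 1 : ℝ) : ℂ))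
          = ∏ m : Fin d, (if (m : ℕ) < (k : ℕ) then sAng d θ (m : ℕ) else 1) from
        Finset.prod_congr rfl fun m _ => by
          by_cases hm : (m : ℕ) < (k : ℕ)
          · rw [if_pos hm, if_pos hm]
            unfold sAng
            rw [dif_pos m.isLt]
          · rw [if_neg hm, if_neg hm]
            simp]
      rw [Fin.prod_univ_eq_prod_range (fun m => if m < (k : ℕ) then sAng d θ m else 1) d]
      exact prod_ite_range _ d (k : ℕ) (by omega)
    · by_cases hk : (k : ℕ) < d
      · rw [dif_pos hk, if_pos hk]
        unfold cAng
        rw [dif_pos hk]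
      · rw [dif_neg hk, if_neg hk]
        simp
  rw [Finset.sum_range (fun n =>
    ((∏ m ∈ Finset.range n, sAng d θ m) * (if n < d then cAng d θ n else 1)) *
      (if x = unary d n then 1 else 0))]
  exact Finset.sum_congr rfl fun k _ => by rw [hW k]
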